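/- Let α ∈ Φ⁺ \ Φ_p⁺ with ⟨ρ_p, α^∨⟩ < 0. Then there exist α_j ∈ Δ_p and β ∈ Φ⁺ \ Φ_p⁺ such that β^∨ = α^∨ + α_j^∨. Moreover, if in addition w ∈ 𝔚_p and α ∈ w⁻¹Φ⁻, then α_j and β can be chosen so that also β ∈ w⁻¹Φ⁻. -/

import Mathlib

open scoped Classical RealInnerProductSpace

noncomputable section

namespace Weng

/-- The completed Riemann zeta function `ζ̂(s) = π^(-s/2) Γ(s/2) ζ(s)`. -/
def zetaHat (s : ℂ) : ℂ := completedRiemannZeta s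

/-- The entire Riemann xi function `ξ(s) = s (s-1) ζ̂(s)`
(written in terms of the entire function `Λ₀` so that the removable singularities
at `s = 0, 1` are correctly filled in). -/
def xi (s : ℂ) : ℂ := s * (s - 1) * completedRiemannZeta₀ s + 1

variable (V : Type) [NormedAddCommGroup V] [InnerProductSpace ℝ V] [FiniteDimensional ℝ V]

/-- The coroot `α^∨ = 2 α / ⟨α, α⟩` of a vector `α`. -/
def coroot (α : V) : V := (2 / ⟪α, α⟫) • α

/-- Reflection in the hyperplane orthogonal to `α`. -/
def srefl (α : V) : V ≃ₗᵢ[ℝ] V := Submodule.reflection (ℝ ∙ α)ᗮ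

variable {V}

/-- A reduced irreducible crystallographic root system `Φ` in a finite dimensional real
inner product space `V`, together with a fundamental system `Δ = {α_1, …, α_r}` (indexed by
`Fin r`), the corresponding positive system `Φ⁺` (`Pos`), and the fundamental weights
`λ_1, …, λ_r` (`fw`). -/
structure RootSystemData (V : Type) [NormedAddCommGroup V] [InnerProductSpace ℝ V]
    [FiniteDimensional ℝ V] : Type where
  /-- the rank -/
  r : ℕ
  /-- the root system -/
  Φ : Finset V
  /-- the simple roots -/
  Δ : Fin r → V
  /-- the positive roots -/
  Pos : Finset V
  /-- the fundamental weights -/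
  fw : Fin r → V
  hΔinj : Function.Injective Δ
  hΔPos : ∀ j, Δ j ∈ Pos
  hspan : Submodule.span ℝ (Φ : Set V) = ⊤
  hzero : (0 : V) ∉ Φ
  hreduced : ∀ α ∈ Φ, ∀ t : ℝ, t • α ∈ (Φ : Set V) → t = 1 ∨ t = -1
  hcrys : ∀ α ∈ Φ, ∀ β ∈ Φ, ∃ n : ℤ, ⟪β, coroot V α⟫ = (n : ℝ)
  hrefl : ∀ α ∈ Φ, ∀ β ∈ Φ, β - ⟪β, coroot V α⟫ • α ∈ Φ
  hirred : ∀ S T : Finset V, S ∪ T = Φ → (∀ a ∈ S, ∀ b ∈ T, ⟪a, b⟫ = 0) →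
    S = ∅ ∨ T = ∅
  hPosSub : Pos ⊆ Φ
  hNegSub : ∀ α ∈ Pos, -α ∈ Φ
  hPosDec : ∀ α ∈ Φ, (α ∈ Pos ∧ -α ∉ Pos) ∨ (α ∉ Pos ∧ -α ∈ Pos)
  hPosComb : ∀ α ∈ Pos, ∃ c : Fin r → ℕ, α = ∑ j, (c j : ℝ) • Δ j
  hfw : ∀ i j, ⟪fw i, coroot V (Δ j)⟫ = if i = j then 1 else 0

namespace RootSystemData

variable {V : Type} [NormedAddCommGroup V] [InnerProductSpace ℝ V] [FiniteDimensional ℝ V]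
variable (d : RootSystemData V)

/-- The set `Φ⁻ = -Φ⁺` of negative roots, as a `Finset`. -/
def NegS : Finset V := d.Pos.image (fun α => -α)

/-- The Weyl vector `ρ = (1/2) Σ_{α ∈ Φ⁺} α`. -/
def rho : V := (2⁻¹ : ℝ) • ∑ α ∈ d.Pos, α

/-- The height `ht α^∨ = ⟨ρ, α^∨⟩` of the coroot of `α`. -/
def ht (α : V) : ℝ := ⟪d.rho, coroot V α⟫

/-- The Weyl group `W`, as the subgroup of the group of linear isometries of `V`
generated by the reflections in the simple roots. -/
def W : Subgroup (V ≃ₗᵢ[ℝ] V) := Subgroup.closure (Set.range fun j => srefl V (d.Δ j))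

/-- The subset `Δ_p = Δ \ {α_p}` of the simple roots, as a set of vectors. -/
def DeltaP (p : Fin d.r) : Set V := d.Δ '' {j | j ≠ p}

/-- `Δ_p` as a `Finset`. -/
def DeltaPFin (p : Fin d.r) : Finset V := (Finset.univ.filter (fun j => j ≠ p)).image d.Δ

/-- The subgroup `W_p` of `W` generated by the reflections in the simple roots in `Δ_p`. -/
def Wp (p : Fin d.r) : Subgroup (V ≃ₗᵢ[ℝ] V) :=
  Subgroup.closure ((fun j => srefl V (d.Δ j)) '' {j | j ≠ p})

/-- The root subsystem `Φ_p = Φ ∩ span_ℝ(Δ_p)`. -/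
def PhiP (p : Fin d.r) : Finset V :=
  d.Φ.filter (fun α => α ∈ Submodule.span ℝ (d.DeltaP p))

/-- The positive system `Φ_p⁺ = Φ⁺ ∩ Φ_p` of `Φ_p`. -/
def PhiPpos (p : Fin d.r) : Finset V := d.Pos ∩ d.PhiP p

/-- `ρ_p = (1/2) Σ_{α ∈ Φ_p⁺} α`. -/
def rhoP (p : Fin d.r) : V := (2⁻¹ : ℝ) • ∑ α ∈ d.PhiPpos p, α

/-- The constant `c_p = 2 ⟨λ_p - ρ_p, α_p^∨⟩`. -/
def cp (p : Fin d.r) : ℝ := 2 * ⟪d.fw p - d.rhoP p, coroot V (d.Δ p)⟫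

/-- The set `𝔚_p = {w ∈ W : Δ_p ⊆ w⁻¹(Δ ∪ Φ⁻)}`. -/
def frakW (p : Fin d.r) : Set (V ≃ₗᵢ[ℝ] V) :=
  {w | w ∈ d.W ∧ ∀ j : Fin d.r, j ≠ p →
    (w (d.Δ j) ∈ Set.range d.Δ ∨ w (d.Δ j) ∈ d.NegS)}

/-- `l_p(w) = |(Φ⁺ \ Φ_p⁺) ∩ w⁻¹ Φ⁻|`. -/
def lp (p : Fin d.r) (w : V ≃ₗᵢ[ℝ] V) : ℕ :=
  ((d.Pos \ d.PhiPpos p).filter (fun α => w α ∈ d.NegS)).card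

/-- `N_{p,w}(k,h) = #{α ∈ w⁻¹Φ⁻ : ⟨λ_p, α^∨⟩ = k, ht α^∨ = h}`. -/
def Npw (p : Fin d.r) (w : V ≃ₗᵢ[ℝ] V) (k h : ℝ) : ℕ :=
  (d.Φ.filter (fun α => w α ∈ d.NegS ∧ ⟪d.fw p, coroot V α⟫ = k ∧ d.ht α = h)).card

/-- `N_p(k,h) = #{α ∈ Φ : ⟨λ_p, α^∨⟩ = k, ht α^∨ = h}`. -/
def Np (p : Fin d.r) (k h : ℝ) : ℕ :=
  (d.Φ.filter (fun α => ⟪d.fw p, coroot V α⟫ = k ∧ d.ht α = h)).card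

/-- `M_p(k,h) = max_{w ∈ 𝔚_p} (N_{p,w}(k,h-1) - N_{p,w}(k,h))`. -/
def Mp (p : Fin d.r) (k h : ℝ) : ℤ :=
  sSup {n : ℤ | ∃ w ∈ d.frakW p, n = (d.Npw p w k (h - 1) : ℤ) - (d.Npw p w k h : ℤ)}

/-- The period `ω_p(s)`. -/
def omegaP (p : Fin d.r) (s : ℂ) : ℂ :=
  ∑ᶠ w ∈ d.frakW p,
    (∏ α ∈ d.Φ.filter (fun α => w α ∈ Set.range d.Δ ∧ α ∉ d.DeltaP p),
        ((⟪d.fw p, coroot V α⟫ : ℂ) * s + (d.ht α : ℂ) - 1)⁻¹) *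
    (∏ α ∈ d.Pos.filter (fun α => w α ∈ d.NegS ∧ α ∉ d.DeltaP p),
        zetaHat ((⟪d.fw p, coroot V α⟫ : ℂ) * s + (d.ht α : ℂ))) *
    (∏ α ∈ d.Φ.filter (fun α => -α ∈ d.Pos ∧ w (-α) ∈ d.NegS),
        (zetaHat ((⟪d.fw p, coroot V α⟫ : ℂ) * s + (d.ht α : ℂ)))⁻¹)

/-- The Weng zeta function
`ζ̂_p(s) = ω_p(s) ∏_{k ≥ 0} ∏_{h ≥ 2} ζ̂(k s + h)^{M_p(k,h)}`
(the product is finite: `M_p(k,h) = 0` outside of the displayed finite range). -/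
def zetaWeng (p : Fin d.r) (s : ℂ) : ℂ :=
  d.omegaP p s *
    ∏ k ∈ Finset.range (d.Φ.card + 2), ∏ h ∈ Finset.range (d.Φ.card + 2),
      (if 2 ≤ h then zetaHat ((k : ℂ) * s + (h : ℂ)) ^ (d.Mp p (k : ℝ) (h : ℝ)) else 1)


/-- `δ_{α,w} = 1` if `α ∈ w⁻¹Φ⁺`, and `δ_{α,w} = 0` if `α ∈ w⁻¹Φ⁻`. -/
def deltaIdx (w : V ≃ₗᵢ[ℝ] V) (α : V) : ℕ := if w α ∈ d.Pos then 1 else 0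

/-- `X̃_{p,w}(s) = ξ(2)^{|Δ_p ∩ w⁻¹Φ⁺|} ∏_{α ∈ Φ⁺ \ Δ_p} ξ(⟨λ_p,α^∨⟩ s + ht α^∨ + δ_{α,w})`. -/
def Xtilde (p : Fin d.r) (w : V ≃ₗᵢ[ℝ] V) (s : ℂ) : ℂ :=
  xi 2 ^ ((d.DeltaPFin p).filter (fun α => w α ∈ d.Pos)).card *
  ∏ α ∈ d.Pos.filter (fun α => α ∉ d.DeltaP p),
    xi ((⟪d.fw p, coroot V α⟫ : ℂ) * s + (d.ht α : ℂ) + (d.deltaIdx w α : ℂ))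

/-- The polynomial factor attached to a single `v ∈ 𝔚_p` appearing in `Q̃_{p,w}` and `Q_p`. -/
def Qfactor (p : Fin d.r) (v : V ≃ₗᵢ[ℝ] V) (s : ℂ) : ℂ :=
  (2 : ℂ) ^ ((d.DeltaPFin p).filter (fun α => v α ∈ d.Pos)).card *
  (∏ α ∈ d.Φ.filter (fun α => v α ∈ Set.range d.Δ ∧ α ∉ d.DeltaP p),
      ((⟪d.fw p, coroot V α⟫ : ℂ) * s + (d.ht α : ℂ) - 1)) *
  ∏ α ∈ d.Pos.filter (fun α => α ∉ d.DeltaP p),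
    ((⟪d.fw p, coroot V α⟫ : ℂ) * s + (d.ht α : ℂ) + (d.deltaIdx v α : ℂ)) *
      ((⟪d.fw p, coroot V α⟫ : ℂ) * s + (d.ht α : ℂ) + (d.deltaIdx v α : ℂ) - 1)

/-- The polynomial `Q̃_{p,w}(s)` (product of the `Qfactor`s over all `v ∈ 𝔚_p`, `v ≠ w`). -/
def Qtilde (p : Fin d.r) (w : V ≃ₗᵢ[ℝ] V) (s : ℂ) : ℂ :=
  ∏ᶠ v ∈ d.frakW p \ {w}, d.Qfactor p v s

/-- The polynomial `Q_p(s)` (product of the `Qfactor`s over all `v ∈ 𝔚_p`). -/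
def Qp (p : Fin d.r) (s : ℂ) : ℂ := ∏ᶠ v ∈ d.frakW p, d.Qfactor p v s

/-- The entire function `X_p(s) = Σ_{w ∈ 𝔚_p} Q̃_{p,w}(s) X̃_{p,w}(s)`. -/
def Xp (p : Fin d.r) (s : ℂ) : ℂ := ∑ᶠ w ∈ d.frakW p, d.Qtilde p w s * d.Xtilde p w s

/-- `X_{p,w}(s) = ∏_{α ∈ Φ⁺ \ Φ_p⁺} ξ(⟨λ_p,α^∨⟩ s + ht α^∨ + δ_{α,w})`. -/
def Xpw (p : Fin d.r) (w : V ≃ₗᵢ[ℝ] V) (s : ℂ) : ℂ :=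
  ∏ α ∈ d.Pos \ d.PhiPpos p,
    xi ((⟪d.fw p, coroot V α⟫ : ℂ) * s + (d.ht α : ℂ) + (d.deltaIdx w α : ℂ))

/-- The constant `C_{p,w} = ξ(2)^{|Δ_p ∩ w⁻¹Φ⁺|} ∏_{α ∈ Φ_p⁺ \ Δ_p} ξ(ht α^∨ + δ_{α,w})`. -/
def Cpw (p : Fin d.r) (w : V ≃ₗᵢ[ℝ] V) : ℂ :=
  xi 2 ^ ((d.DeltaPFin p).filter (fun α => w α ∈ d.Pos)).card *
  ∏ α ∈ (d.PhiPpos p).filter (fun α => α ∉ d.DeltaP p),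
    xi ((d.ht α : ℂ) + (d.deltaIdx w α : ℂ))

/-- `Q_{p,w}(s) = C_{p,w} Q̃_{p,w}(s)`. -/
def Qpw (p : Fin d.r) (w : V ≃ₗᵢ[ℝ] V) (s : ℂ) : ℂ := d.Cpw p w * d.Qtilde p w s

/-- `𝔚_p⁺ = {w ∈ 𝔚_p : l_p(w) < |Φ⁺ \ Φ_p⁺| / 2}`. -/
def frakWplus (p : Fin d.r) : Set (V ≃ₗᵢ[ℝ] V) :=
  {w ∈ d.frakW p | 2 * d.lp p w < (d.Pos \ d.PhiPpos p).card}

/-- `𝔚_p⁰ = {w ∈ 𝔚_p : l_p(w) = |Φ⁺ \ Φ_p⁺| / 2}`. -/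
def frakWzero (p : Fin d.r) : Set (V ≃ₗᵢ[ℝ] V) :=
  {w ∈ d.frakW p | 2 * d.lp p w = (d.Pos \ d.PhiPpos p).card}

/-- `𝔚_p‡ = {w ∈ 𝔚_p : l_p(w) = 0}`. -/
def frakWdag (p : Fin d.r) : Set (V ≃ₗᵢ[ℝ] V) :=
  {w ∈ d.frakW p | d.lp p w = 0}

/-- `E_p(s) = Σ_{w ∈ 𝔚_p⁺} Q_{p,w}(s) X_{p,w}(s) + (1/2) Σ_{w ∈ 𝔚_p⁰} Q_{p,w}(s) X_{p,w}(s)`. -/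
def Ep (p : Fin d.r) (s : ℂ) : ℂ :=
  (∑ᶠ w ∈ d.frakWplus p, d.Qpw p w s * d.Xpw p w s) +
    (2 : ℂ)⁻¹ * ∑ᶠ w ∈ d.frakWzero p, d.Qpw p w s * d.Xpw p w s

end RootSystemData

end Weng

/-!
Since `⟨ρ_p, α^∨⟩ < 0`, some root of `Φ_p⁺`, hence some simple root `α_j ∈ Δ_p`, pairs negatively
with `α^∨`. The Cartan integers `⟨α_j, α^∨⟩` and `⟨α, α_j^∨⟩` are then negative with product
`4 cos² θ < 4`, so one of them is `-1`; reflecting `α` in `α_j`, or `α_j` in `α`, accordingly gives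
a root `β` with `β^∨ = α^∨ + α_j^∨` whose `α_p`-coefficient is still positive.
For `w ∈ 𝔚_p` the root `w α_j` is simple or negative, so if `w β` were positive then
`(wβ)^∨ + (-wα)^∨ = (wα_j)^∨` would write a simple coroot as a sum of two positive coroots, or `0`
as a sum of three; pairing with the fundamental weights rules out both.
-/

namespace Weng

section InnerProductSpace

variable {V : Type} [NormedAddCommGroup V] [InnerProductSpace ℝ V]

theorem inner_coroot (a x : V) : ⟪x, coroot V a⟫ = 2 / ⟪a, a⟫ * ⟪x, a⟫ :=
  real_inner_smul_right x a _

theorem coroot_neg (x : V) : coroot V (-x) = -coroot V x := by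
  simp [coroot]

theorem coroot_map (w : V ≃ₗᵢ[ℝ] V) (x : V) : coroot V (w x) = w (coroot V x) := by
  rw [coroot, coroot, LinearIsometryEquiv.inner_map_map, LinearIsometryEquiv.map_smul]

theorem srefl_apply (a x : V) : srefl V a x = x - ⟪x, coroot V a⟫ • a := by
  rw [srefl, Submodule.reflection_orthogonal_apply, Submodule.reflection_singleton_apply,
    inner_coroot, real_inner_comm x a]
  simp only [RCLike.ofReal_real_eq_id, id_eq]
  rw [← real_inner_self_eq_norm_sq]
  module

theorem inner_srefl (a x y : V) : ⟪y, srefl V a x⟫ = ⟪y, x⟫ - ⟪x, coroot V a⟫ * ⟪y, a⟫ := by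
  rw [srefl_apply, inner_sub_right, real_inner_smul_right]

theorem srefl_srefl (a x : V) : srefl V a (srefl V a x) = x :=
  Submodule.reflection_involutive _ x

/-- Reflections act on coroots as on roots, so `s_a(x)^∨ = x^∨ - ⟨a, x^∨⟩ a^∨`. -/
theorem coroot_srefl_of_inner_coroot_eq_neg_one {a x : V} (h : ⟪a, coroot V x⟫ = -1) :
    coroot V (srefl V a x) = coroot V x + coroot V a := by
  rw [coroot_map, srefl_apply, inner_coroot a, real_inner_comm a (coroot V x), h]
  nth_rw 3 [coroot]
  module

theorem inner_coroot_eq_zero_iff {a : V} (ha : a ≠ 0) (x : V) :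
    ⟪x, coroot V a⟫ = 0 ↔ ⟪x, a⟫ = 0 := by
  have : 0 < 2 / ⟪a, a⟫ := div_pos two_pos (real_inner_self_pos.mpr ha)
  rw [inner_coroot, mul_eq_zero, or_iff_right this.ne']

theorem inner_coroot_pos_iff {a : V} (ha : a ≠ 0) (x : V) :
    0 < ⟪x, coroot V a⟫ ↔ 0 < ⟪x, a⟫ := by
  rw [inner_coroot, mul_pos_iff_of_pos_left (div_pos two_pos (real_inner_self_pos.mpr ha))]

theorem inner_coroot_nonneg_iff {a : V} (ha : a ≠ 0) (x : V) :
    0 ≤ ⟪x, coroot V a⟫ ↔ 0 ≤ ⟪x, a⟫ := by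
  rw [inner_coroot, mul_nonneg_iff_of_pos_left (div_pos two_pos (real_inner_self_pos.mpr ha))]

theorem inner_coroot_neg_iff {a : V} (ha : a ≠ 0) (x : V) :
    ⟪x, coroot V a⟫ < 0 ↔ ⟪x, a⟫ < 0 := by
  simpa only [not_le] using (inner_coroot_nonneg_iff ha x).not

theorem sq_inner_lt_inner_self_mul_inner_self {a b : V} (hb : b ≠ 0) (h : ∀ t : ℝ, a ≠ t • b) :
    ⟪a, b⟫ ^ 2 < ⟪a, a⟫ * ⟪b, b⟫ := by
  have ha : a ≠ 0 := by simpa using h 0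
  refine lt_of_le_of_ne (by nlinarith [real_inner_mul_inner_self_le a b]) fun heq => ?_
  have hnorm : ‖⟪b, a⟫‖ = ‖b‖ * ‖a‖ := by
    rw [Real.norm_eq_abs, ← sq_eq_sq₀ (abs_nonneg _) (by positivity), sq_abs, mul_pow,
      ← real_inner_self_eq_norm_sq, ← real_inner_self_eq_norm_sq, real_inner_comm, heq, mul_comm]
  obtain ⟨t, -, hat⟩ := (norm_inner_eq_norm_iff hb ha).mp hnorm
  exact h t hat

theorem inner_coroot_eq_neg_one_or_of_inner_neg {a b : V} {m n : ℤ}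
    (hm : ⟪a, coroot V b⟫ = m) (hn : ⟪b, coroot V a⟫ = n) (hab : ⟪a, b⟫ < 0)
    (h : ∀ t : ℝ, a ≠ t • b) :
    ⟪a, coroot V b⟫ = -1 ∨ ⟪b, coroot V a⟫ = -1 := by
  have hb : b ≠ 0 := by rintro rfl; simp at hab
  have hCS := sq_inner_lt_inner_self_mul_inner_self hb h
  have haa : 0 < ⟪a, a⟫ := real_inner_self_pos.mpr (by simpa using h 0)
  have hbb : 0 < ⟪b, b⟫ := real_inner_self_pos.mpr hb
  rw [inner_coroot] at hm ⊢
  rw [inner_coroot, real_inner_comm a b] at hn ⊢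
  have hm0 : m < 0 := by
    have : (m : ℝ) < 0 := hm ▸ mul_neg_of_pos_of_neg (by positivity) hab
    exact_mod_cast this
  have hn0 : n < 0 := by
    have : (n : ℝ) < 0 := hn ▸ mul_neg_of_pos_of_neg (by positivity) hab
    exact_mod_cast this
  have hmn : m * n < 4 := by
    have : (m * n : ℝ) * (⟪a, a⟫ * ⟪b, b⟫) = 4 * ⟪a, b⟫ ^ 2 := by
      rw [← hm, ← hn]
      field_simp
      ring
    have : (m * n : ℝ) < 4 := by nlinarith [mul_pos haa hbb]
    exact_mod_cast this
  rw [hm, hn]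
  have : m = -1 ∨ n = -1 := by
    by_contra! hne
    nlinarith [show m ≤ -2 by omega, show n ≤ -2 by omega]
  exact_mod_cast this

end InnerProductSpace

namespace RootSystemData

variable {V : Type} [NormedAddCommGroup V] [InnerProductSpace ℝ V] [FiniteDimensional ℝ V]
  (d : RootSystemData V)

theorem ne_zero_of_mem {x : V} (hx : x ∈ d.Φ) : x ≠ 0 := fun h => d.hzero (h ▸ hx)

theorem Δ_mem (j : Fin d.r) : d.Δ j ∈ d.Φ := d.hPosSub (d.hΔPos j)

theorem mem_NegS_iff {x : V} : x ∈ d.NegS ↔ -x ∈ d.Pos := by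
  rw [NegS, Finset.mem_image]
  exact ⟨fun ⟨y, hy, hyx⟩ => hyx ▸ (neg_neg y).symm ▸ hy, fun h => ⟨-x, h, neg_neg x⟩⟩

theorem mem_NegS_of_notMem_Pos {x : V} (hx : x ∈ d.Φ) (h : x ∉ d.Pos) : x ∈ d.NegS :=
  d.mem_NegS_iff.mpr ((d.hPosDec x hx).resolve_left fun h' => h h'.1).2

theorem srefl_mem {a x : V} (ha : a ∈ d.Φ) (hx : x ∈ d.Φ) : srefl V a x ∈ d.Φ := by
  rw [srefl_apply]
  exact d.hrefl a ha x hx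

theorem map_mem_of_mem_W {w : V ≃ₗᵢ[ℝ] V} (hw : w ∈ d.W) {x : V} (hx : x ∈ d.Φ) : w x ∈ d.Φ := by
  suffices ∀ x, w x ∈ d.Φ ↔ x ∈ d.Φ from (this x).mpr hx
  induction hw using Subgroup.closure_induction with
  | mem s hs =>
    obtain ⟨j, rfl⟩ := hs
    exact fun x =>
      ⟨fun h => srefl_srefl (d.Δ j) x ▸ d.srefl_mem (d.Δ_mem j) h, d.srefl_mem (d.Δ_mem j)⟩
  | one => simp
  | mul a b _ _ ha hb => exact fun x => (ha (b x)).trans (hb x)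
  | inv a _ ha => exact fun x => by rw [← ha (a⁻¹ x)]; simp

theorem inner_fw_Δ (i l : Fin d.r) :
    ⟪d.fw i, d.Δ l⟫ = if i = l then ⟪d.Δ l, d.Δ l⟫ / 2 else 0 := by
  have h := d.hfw i l
  have hl : d.Δ l ≠ 0 := d.ne_zero_of_mem (d.Δ_mem l)
  rw [inner_coroot] at h
  split_ifs at h ⊢
  · have : ⟪d.Δ l, d.Δ l⟫ ≠ 0 := inner_self_ne_zero.mpr hl
    field_simp at h ⊢
    linarith
  · simpa [hl] using h

theorem inner_fw_sum_smul_Δ (c : Fin d.r → ℝ) (i : Fin d.r) :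
    ⟪d.fw i, ∑ l, c l • d.Δ l⟫ = c i * (⟪d.Δ i, d.Δ i⟫ / 2) := by
  simp [inner_sum, real_inner_smul_right, inner_fw_Δ]

theorem inner_fw_sum_smul_Δ_eq_zero_iff (c : Fin d.r → ℝ) (i : Fin d.r) :
    ⟪d.fw i, ∑ l, c l • d.Δ l⟫ = 0 ↔ c i = 0 := by
  have : d.Δ i ≠ 0 := d.ne_zero_of_mem (d.Δ_mem i)
  rw [inner_fw_sum_smul_Δ]
  simp [this]

theorem inner_fw_nonneg {ε : V} (hε : ε ∈ d.Pos) (i : Fin d.r) : 0 ≤ ⟪d.fw i, ε⟫ := by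
  obtain ⟨c, rfl⟩ := d.hPosComb ε hε
  rw [inner_fw_sum_smul_Δ]
  have := real_inner_self_nonneg (x := d.Δ i)
  positivity

theorem exists_inner_fw_pos {ε : V} (hε : ε ∈ d.Pos) : ∃ i, 0 < ⟪d.fw i, ε⟫ := by
  by_contra! h
  obtain ⟨c, rfl⟩ := d.hPosComb ε hε
  have hc : ∀ i, (c i : ℝ) = 0 := fun i =>
    (d.inner_fw_sum_smul_Δ_eq_zero_iff _ i).mp ((h i).antisymm (d.inner_fw_nonneg hε i))
  exact d.ne_zero_of_mem (d.hPosSub hε) (by simp [hc])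

theorem eq_Δ_of_inner_fw_eq_zero {ε : V} (hε : ε ∈ d.Pos) (k : Fin d.r)
    (h : ∀ i ≠ k, ⟪d.fw i, ε⟫ = 0) : ε = d.Δ k := by
  obtain ⟨c, hc⟩ := d.hPosComb ε hε
  have hci : ∀ i ≠ k, (c i : ℝ) = 0 := fun i hi =>
    (d.inner_fw_sum_smul_Δ_eq_zero_iff _ i).mp (hc ▸ h i hi)
  have hck : ε = (c k : ℝ) • d.Δ k := by
    rw [hc, Finset.sum_eq_single k (fun i _ hi => by rw [hci i hi, zero_smul]) (by simp)]
  rcases d.hreduced _ (d.Δ_mem k) _ (hck ▸ d.hPosSub hε) with h1 | h1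
  · rw [hck, h1, one_smul]
  · linarith [h1 ▸ (c k).cast_nonneg (α := ℝ)]

theorem inner_fw_eq_zero_of_mem_span {p : Fin d.r} {x : V}
    (hx : x ∈ Submodule.span ℝ (d.DeltaP p)) : ⟪d.fw p, x⟫ = 0 := by
  induction hx using Submodule.span_induction with
  | mem y hy =>
    obtain ⟨j, hj, rfl⟩ := hy
    rw [inner_fw_Δ, if_neg (Ne.symm hj)]
  | zero => simp
  | add y z _ _ hy hz => rw [inner_add_right, hy, hz, add_zero]
  | smul t y _ hy => rw [real_inner_smul_right, hy, mul_zero]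

theorem mem_span_DeltaP_of_inner_fw_eq_zero {p : Fin d.r} {ε : V} (hε : ε ∈ d.Pos)
    (h : ⟪d.fw p, ε⟫ = 0) : ε ∈ Submodule.span ℝ (d.DeltaP p) := by
  obtain ⟨c, rfl⟩ := d.hPosComb ε hε
  have hcp := (d.inner_fw_sum_smul_Δ_eq_zero_iff _ p).mp h
  refine Submodule.sum_mem _ fun l _ => ?_
  by_cases hl : l = p
  · simp [hl, hcp]
  · exact Submodule.smul_mem _ _ (Submodule.subset_span ⟨l, hl, rfl⟩)

theorem mem_Pos_sdiff_PhiPpos_iff {p : Fin d.r} {β : V} (hβ : β ∈ d.Φ) :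
    β ∈ d.Pos \ d.PhiPpos p ↔ 0 < ⟪d.fw p, β⟫ := by
  simp only [Finset.mem_sdiff, PhiPpos, PhiP, Finset.mem_inter, Finset.mem_filter, hβ, true_and]
  constructor
  · rintro ⟨hβPos, hspan⟩
    refine (d.inner_fw_nonneg hβPos p).lt_of_ne fun h => ?_
    exact hspan ⟨hβPos, d.mem_span_DeltaP_of_inner_fw_eq_zero hβPos h.symm⟩
  · intro h
    have hβPos : β ∈ d.Pos := by
      refine ((d.hPosDec β hβ).resolve_right fun hneg => ?_).1
      have := d.inner_fw_nonneg hneg.2 p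
      rw [inner_neg_right] at this
      linarith
    exact ⟨hβPos, fun ⟨_, hspan⟩ => h.ne' (d.inner_fw_eq_zero_of_mem_span hspan)⟩

theorem exists_Δ_inner_neg_of_inner_rhoP_neg {p : Fin d.r} {x : V}
    (h : ⟪d.rhoP p, x⟫ < 0) : ∃ j ≠ p, ⟪d.Δ j, x⟫ < 0 := by
  obtain ⟨γ, hγ, hγx⟩ : ∃ γ ∈ d.PhiPpos p, ⟪γ, x⟫ < 0 := by
    rw [rhoP, real_inner_smul_left, sum_inner] at h
    have hsum : ∑ γ ∈ d.PhiPpos p, ⟪γ, x⟫ < ∑ γ ∈ d.PhiPpos p, (0 : ℝ) := by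
      rw [Finset.sum_const_zero]
      linarith
    simpa using Finset.exists_lt_of_sum_lt hsum
  obtain ⟨hγPos, hγspan⟩ := Finset.mem_inter.mp hγ
  obtain ⟨c, rfl⟩ := d.hPosComb γ hγPos
  have hcp : (c p : ℝ) = 0 := (d.inner_fw_sum_smul_Δ_eq_zero_iff _ p).mp
    (d.inner_fw_eq_zero_of_mem_span (Finset.mem_filter.mp hγspan).2)
  rw [sum_inner, ← Finset.sum_const_zero (s := (Finset.univ : Finset (Fin d.r)))] at hγx
  obtain ⟨j, -, hj⟩ := Finset.exists_lt_of_sum_lt hγx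
  rw [real_inner_smul_left] at hj
  refine ⟨j, fun hjp => ?_, ?_⟩
  · simp [hjp, hcp] at hj
  · by_contra! hnonneg
    exact (mul_nonneg (c j).cast_nonneg hnonneg).not_gt hj

theorem srefl_mem_Pos_sdiff_PhiPpos {p : Fin d.r} {a x : V} (ha : a ∈ d.Pos) (hx : x ∈ d.Pos)
    (hxa : ⟪x, coroot V a⟫ < 0) (h : a ∉ d.PhiPpos p ∨ x ∉ d.PhiPpos p) :
    srefl V a x ∈ d.Pos \ d.PhiPpos p := by
  have haΦ := d.hPosSub ha
  have hxΦ := d.hPosSub hx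
  rw [d.mem_Pos_sdiff_PhiPpos_iff (d.srefl_mem haΦ hxΦ), inner_srefl]
  have := d.inner_fw_nonneg ha p
  have := d.inner_fw_nonneg hx p
  rcases h with h | h
  · have := (d.mem_Pos_sdiff_PhiPpos_iff haΦ).mp (Finset.mem_sdiff.mpr ⟨ha, h⟩)
    nlinarith
  · have := (d.mem_Pos_sdiff_PhiPpos_iff hxΦ).mp (Finset.mem_sdiff.mpr ⟨hx, h⟩)
    nlinarith

theorem exists_coroot_eq_coroot_add_coroot_Δ {p j : Fin d.r} {α : V}
    (hα : α ∈ d.Pos \ d.PhiPpos p) (hj : j ≠ p) (hαj : ⟪d.Δ j, coroot V α⟫ < 0) :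
    ∃ β ∈ d.Pos \ d.PhiPpos p, coroot V β = coroot V α + coroot V (d.Δ j) := by
  obtain ⟨hαPos, hαp⟩ := Finset.mem_sdiff.mp hα
  have hαΦ := d.hPosSub hαPos
  have hΔ0 := d.ne_zero_of_mem (d.Δ_mem j)
  have hinner : ⟪α, d.Δ j⟫ < 0 := by
    rwa [inner_coroot_neg_iff (d.ne_zero_of_mem hαΦ), real_inner_comm] at hαj
  have hprop : ∀ t : ℝ, α ≠ t • d.Δ j := by
    intro t ht
    have := (d.mem_Pos_sdiff_PhiPpos_iff hαΦ).mp hα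
    rw [ht, real_inner_smul_right, inner_fw_Δ, if_neg hj.symm, mul_zero] at this
    exact this.false
  obtain ⟨m, hm⟩ := d.hcrys _ (d.Δ_mem j) α hαΦ
  obtain ⟨n, hn⟩ := d.hcrys α hαΦ _ (d.Δ_mem j)
  rcases inner_coroot_eq_neg_one_or_of_inner_neg hm hn hinner hprop with h | h
  · refine ⟨srefl V α (d.Δ j), d.srefl_mem_Pos_sdiff_PhiPpos hαPos (d.hΔPos j) hαj (.inl hαp), ?_⟩
    rw [coroot_srefl_of_inner_coroot_eq_neg_one h, add_comm]
  · have hjα : ⟪α, coroot V (d.Δ j)⟫ < 0 := (inner_coroot_neg_iff hΔ0 _).mpr hinner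
    exact ⟨srefl V (d.Δ j) α, d.srefl_mem_Pos_sdiff_PhiPpos (d.hΔPos j) hαPos hjα (.inr hαp),
      coroot_srefl_of_inner_coroot_eq_neg_one h⟩

theorem inner_fw_coroot_nonneg {ε : V} (hε : ε ∈ d.Pos) (i : Fin d.r) :
    0 ≤ ⟪d.fw i, coroot V ε⟫ :=
  (inner_coroot_nonneg_iff (d.ne_zero_of_mem (d.hPosSub hε)) _).mpr (d.inner_fw_nonneg hε i)

theorem coroot_add_coroot_add_coroot_ne_zero {ε η ζ : V} (hε : ε ∈ d.Pos) (hη : η ∈ d.Pos)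
    (hζ : ζ ∈ d.Pos) : coroot V ε + coroot V η + coroot V ζ ≠ 0 := by
  intro h
  obtain ⟨i, hi⟩ := d.exists_inner_fw_pos hε
  have hsum := congrArg (⟪d.fw i, ·⟫) h
  simp only [inner_add_right, inner_zero_right] at hsum
  have := (inner_coroot_pos_iff (d.ne_zero_of_mem (d.hPosSub hε)) _).mpr hi
  linarith [d.inner_fw_coroot_nonneg hη i, d.inner_fw_coroot_nonneg hζ i]

theorem coroot_add_coroot_ne_coroot_Δ {ε η : V} (hε : ε ∈ d.Pos) (hη : η ∈ d.Pos) (k : Fin d.r) :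
    coroot V ε + coroot V η ≠ coroot V (d.Δ k) := by
  intro h
  have hvanish : ∀ i ≠ k, ⟪d.fw i, coroot V ε⟫ = 0 ∧ ⟪d.fw i, coroot V η⟫ = 0 := by
    intro i hi
    have hsum := congrArg (⟪d.fw i, ·⟫) h
    simp only [inner_add_right, d.hfw, if_neg hi] at hsum
    have := d.inner_fw_coroot_nonneg hε i
    have := d.inner_fw_coroot_nonneg hη i
    constructor <;> linarith
  have hεk := d.eq_Δ_of_inner_fw_eq_zero hε k fun i hi =>
    (inner_coroot_eq_zero_iff (d.ne_zero_of_mem (d.hPosSub hε)) _).mp (hvanish i hi).1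
  have hηk := d.eq_Δ_of_inner_fw_eq_zero hη k fun i hi =>
    (inner_coroot_eq_zero_iff (d.ne_zero_of_mem (d.hPosSub hη)) _).mp (hvanish i hi).2
  rw [hεk, hηk, add_eq_right] at h
  simpa [h] using d.hfw k k

theorem map_mem_NegS_of_coroot_eq_add {p j : Fin d.r} {w : V ≃ₗᵢ[ℝ] V} {α β : V}
    (hw : w ∈ d.frakW p) (hj : j ≠ p) (hβ : β ∈ d.Φ)
    (hco : coroot V β = coroot V α + coroot V (d.Δ j)) (hwα : w α ∈ d.NegS) : w β ∈ d.NegS := by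
  obtain ⟨hwW, hwΔ⟩ := hw
  refine d.mem_NegS_of_notMem_Pos (d.map_mem_of_mem_W hwW hβ) fun hwβ => ?_
  have hwα' : -w α ∈ d.Pos := d.mem_NegS_iff.mp hwα
  have hwco : coroot V (w β) + coroot V (-w α) = coroot V (w (d.Δ j)) := by
    rw [coroot_neg, coroot_map, coroot_map, coroot_map, hco, map_add]
    abel
  rcases hwΔ j hj with ⟨k, hk⟩ | hwj
  · exact d.coroot_add_coroot_ne_coroot_Δ hwβ hwα' k (hk ▸ hwco)
  · refine d.coroot_add_coroot_add_coroot_ne_zero hwβ hwα' (d.mem_NegS_iff.mp hwj) ?_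
    rw [hwco, coroot_neg, add_neg_cancel]

end RootSystemData

end Weng

open Weng

/-- Let `α ∈ Φ⁺ \ Φ_p⁺` with `⟨ρ_p, α^∨⟩ < 0`. Then there are `α_j ∈ Δ_p` and
`β ∈ Φ⁺ \ Φ_p⁺` with `β^∨ = α^∨ + α_j^∨`; moreover if `w ∈ 𝔚_p` and `α ∈ w⁻¹Φ⁻`,
then `α_j` and `β` can be chosen with also `β ∈ w⁻¹Φ⁻`. -/
theorem weng_coroot_raising
    {V : Type} [NormedAddCommGroup V] [InnerProductSpace ℝ V] [FiniteDimensional ℝ V]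
    (d : RootSystemData V) (p : Fin d.r)
    (α : V) (hα : α ∈ d.Pos \ d.PhiPpos p) (hneg : ⟪d.rhoP p, coroot V α⟫ < 0) :
    (∃ j : Fin d.r, j ≠ p ∧ ∃ β ∈ d.Pos \ d.PhiPpos p,
        coroot V β = coroot V α + coroot V (d.Δ j)) ∧
    ∀ w ∈ d.frakW p, w α ∈ d.NegS →
      ∃ j : Fin d.r, j ≠ p ∧ ∃ β ∈ d.Pos \ d.PhiPpos p,
        coroot V β = coroot V α + coroot V (d.Δ j) ∧ w β ∈ d.NegS := by
  obtain ⟨j, hjp, hj⟩ := d.exists_Δ_inner_neg_of_inner_rhoP_neg hneg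
  obtain ⟨β, hβ, hco⟩ := d.exists_coroot_eq_coroot_add_coroot_Δ hα hjp hj
  have hβΦ : β ∈ d.Φ := d.hPosSub (Finset.mem_sdiff.mp hβ).1
  exact ⟨⟨j, hjp, β, hβ, hco⟩, fun w hw hwα =>
    ⟨j, hjp, β, hβ, hco, d.map_mem_NegS_of_coroot_eq_add hw hjp hβΦ hco hwα⟩⟩
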